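/- arXiv:2005.02056 — 4 statements merged into one kernel-verified Lean document; each statement's English description precedes it below -/
import Mathlib

section
/- Let Diagram 1 of abelian groups be given and let (X, i, j, m, n) be an extension of Diagram 1. Let Y = F ×_Q G be the pullback of F → Q and G → Q. Then the map (m,n) : X → Y, x ↦ (m(x), n(x)), is a well-defined surjective homomorphism whose kernel is exactly the image of the injective map i∘μ : P → X; that is, the sequence 0 → P →^{i∘μ} X →^{(m,n)} Y → 0 is short exact. In particular, ker(m) ∩ ker(n) = (i∘μ)(P) = (j∘ν)(P). -/
/-
The map `(m, n)` kills exactly `ker m ⊓ ker n`. Since `ker m = i(H)` and `n ∘ i = σ ∘ πH` with `σ`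
injective, an element `i h` lies in `ker n` iff `h ∈ ker πH = μ(P)`. For surjectivity, lift `f ∈ F`
along `m` to some `x`; the defect `g - n x` lies in `ker πG = σ(S) = n(i(H)) = n(ker m)`, so it can
be corrected by an element of `ker m`, which does not change `m x`.
-/

universe u

variable {F G Q : Type u} [AddCommGroup F] [AddCommGroup G] [AddCommGroup Q]

/-- The pullback `Y = F ×_Q G = {(f,g) ∈ F × G : πF f = πG g}` of `πF : F → Q`
and `πG : G → Q`, as a subgroup of `F × G`. -/
def pullbackSubgroup (πF : F →+ Q) (πG : G →+ Q) : AddSubgroup (F × G) where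
  carrier := {p | πF p.1 = πG p.2}
  zero_mem' := by simp
  add_mem' := by
    intro a b ha hb
    simp only [Set.mem_setOf_eq, Prod.fst_add, Prod.snd_add, map_add] at *
    rw [ha, hb]
  neg_mem' := by
    intro a ha
    simp only [Set.mem_setOf_eq, Prod.fst_neg, Prod.snd_neg, map_neg] at *
    rw [ha]

/-- The map `(m, n) : X → Y = F ×_Q G`, `x ↦ (m x, n x)`, well defined because
`πF ∘ m = πG ∘ n`. -/
def toPullback {X : Type u} [AddCommGroup X] (m : X →+ F) (n : X →+ G)
    (πF : F →+ Q) (πG : G →+ Q) (hsq : πF.comp m = πG.comp n) :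
    X →+ pullbackSubgroup πF πG :=
  AddMonoidHom.codRestrict (m.prod n) _ (fun x => DFunLike.congr_fun hsq x)

open AddMonoidHom

section

variable {X : Type u} [AddCommGroup X]

theorem ker_toPullback (m : X →+ F) (n : X →+ G) (πF : F →+ Q) (πG : G →+ Q)
    (hsq : πF.comp m = πG.comp n) : (toPullback m n πF πG hsq).ker = m.ker ⊓ n.ker :=
  (ker_codRestrict _ _ _).trans (ker_prod m n)

theorem toPullback_surjective {m : X →+ F} {n : X →+ G} {πF : F →+ Q} {πG : G →+ Q}
    (hsq : πF.comp m = πG.comp n) (hm : Function.Surjective m) (hker : πG.ker ≤ m.ker.map n) :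
    Function.Surjective (toPullback m n πF πG hsq) := by
  rintro ⟨⟨f, g⟩, hfg : πF f = πG g⟩
  obtain ⟨x, rfl⟩ := hm f
  have hdefect : g - n x ∈ πG.ker := by
    rw [mem_ker, map_sub, ← hfg, sub_eq_zero]
    exact DFunLike.congr_fun hsq x
  obtain ⟨y, hy : m y = 0, hny⟩ := hker hdefect
  refine ⟨x + y, Subtype.ext (Prod.ext ?_ ?_)⟩
  · change m (x + y) = m x
    rw [map_add, hy, add_zero]
  · change n (x + y) = g
    rw [map_add, hny, add_sub_cancel]

end

section

variable {H S X F G : Type*} [AddCommGroup H] [AddCommGroup S] [AddCommGroup X]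
  [AddCommGroup F] [AddCommGroup G] {i : H →+ X} {m : X →+ F} {n : X →+ G} {σ : S →+ G}
  {πH : H →+ S}

theorem ker_inf_ker_eq_map_ker (hexact : m.ker = i.range) (hσ : Function.Injective σ)
    (hsq : n.comp i = σ.comp πH) : m.ker ⊓ n.ker = πH.ker.map i :=
  calc m.ker ⊓ n.ker = (n.ker.comap i).map i := by rw [AddSubgroup.map_comap_eq, hexact]
    _ = πH.ker.map i := by rw [comap_ker, hsq, ker_comp_of_injective _ _ hσ]

theorem map_ker_eq_range_of_comp_eq (hexact : m.ker = i.range)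
    (hπH : Function.Surjective πH) (hsq : n.comp i = σ.comp πH) : m.ker.map n = σ.range := by
  rw [hexact, map_range, hsq, range_comp, range_eq_top_of_surjective _ hπH, ← range_eq_map]

end

theorem extension_gives_shortExact_over_pullback_general
    {P E H S X : Type u} [AddCommGroup P] [AddCommGroup E]
    [AddCommGroup H] [AddCommGroup S] [AddCommGroup X]
    -- row 1 : 0 → P → E → R → 0
    (ν : P →+ E)
    -- row 2 : 0 → S → G → Q → 0
    (σ : S →+ G) (πG : G →+ Q)
    (hσ : Function.Injective σ)
    (hrow2 : AddMonoidHom.ker πG = AddMonoidHom.range σ)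
    -- column 1 : 0 → P → H → S → 0
    (μ : P →+ H) (πH : H →+ S)
    (hμ : Function.Injective μ) (hπH : Function.Surjective πH)
    (hcol1 : AddMonoidHom.ker πH = AddMonoidHom.range μ)
    -- column 2 : 0 → R → F → Q → 0
    (πF : F →+ Q)
    -- the extension (X, i, j, m, n) of Diagram 1
    (i : H →+ X) (j : E →+ X) (m : X →+ F) (n : X →+ G)
    -- middle row 0 → H → X → F → 0
    (hi : Function.Injective i) (hm : Function.Surjective m)
    (hmidrow : AddMonoidHom.ker m = AddMonoidHom.range i)
    -- commuting squares
    (hsq1 : i.comp μ = j.comp ν)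
    (hsq3 : n.comp i = σ.comp πH)
    (hsq4 : πF.comp m = πG.comp n) :
    Function.Injective (i.comp μ) ∧
    Function.Surjective (toPullback m n πF πG hsq4) ∧
    AddMonoidHom.ker (toPullback m n πF πG hsq4) = AddMonoidHom.range (i.comp μ) ∧
    AddMonoidHom.ker m ⊓ AddMonoidHom.ker n = AddMonoidHom.range (i.comp μ) ∧
    AddMonoidHom.range (i.comp μ) = AddMonoidHom.range (j.comp ν) := by
  have hinf : m.ker ⊓ n.ker = (i.comp μ).range := by
    rw [ker_inf_ker_eq_map_ker hmidrow hσ hsq3, hcol1, range_comp]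
  have hsurj : Function.Surjective (toPullback m n πF πG hsq4) :=
    toPullback_surjective hsq4 hm
      (by rw [hrow2, map_ker_eq_range_of_comp_eq hmidrow hπH hsq3])
  exact ⟨hi.comp hμ, hsurj, by rw [ker_toPullback, hinf], hinf, by rw [hsq1]⟩

/-- Given Diagram 1 of abelian groups and an extension `(X, i, j, m, n)` of it, the map
`(m,n) : X → Y = F ×_Q G` is a surjective homomorphism whose kernel is exactly the image
of the injective map `i∘μ : P → X`; that is, `0 → P → X → Y → 0` is short exact.
In particular `ker m ∩ ker n = (i∘μ)(P) = (j∘ν)(P)`. -/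
theorem extension_gives_shortExact_over_pullback
    {P E R H S X : Type u} [AddCommGroup P] [AddCommGroup E] [AddCommGroup R]
    [AddCommGroup H] [AddCommGroup S] [AddCommGroup X]
    -- row 1 : 0 → P → E → R → 0
    (ν : P →+ E) (πE : E →+ R)
    (hν : Function.Injective ν) (hπE : Function.Surjective πE)
    (hrow1 : AddMonoidHom.ker πE = AddMonoidHom.range ν)
    -- row 2 : 0 → S → G → Q → 0
    (σ : S →+ G) (πG : G →+ Q)
    (hσ : Function.Injective σ) (hπG : Function.Surjective πG)
    (hrow2 : AddMonoidHom.ker πG = AddMonoidHom.range σ)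
    -- column 1 : 0 → P → H → S → 0
    (μ : P →+ H) (πH : H →+ S)
    (hμ : Function.Injective μ) (hπH : Function.Surjective πH)
    (hcol1 : AddMonoidHom.ker πH = AddMonoidHom.range μ)
    -- column 2 : 0 → R → F → Q → 0
    (ρ : R →+ F) (πF : F →+ Q)
    (hρ : Function.Injective ρ) (hπF : Function.Surjective πF)
    (hcol2 : AddMonoidHom.ker πF = AddMonoidHom.range ρ)
    -- the extension (X, i, j, m, n) of Diagram 1
    (i : H →+ X) (j : E →+ X) (m : X →+ F) (n : X →+ G)
    -- middle row 0 → H → X → F → 0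
    (hi : Function.Injective i) (hm : Function.Surjective m)
    (hmidrow : AddMonoidHom.ker m = AddMonoidHom.range i)
    -- middle column 0 → E → X → G → 0
    (hj : Function.Injective j) (hn : Function.Surjective n)
    (hmidcol : AddMonoidHom.ker n = AddMonoidHom.range j)
    -- commuting squares
    (hsq1 : i.comp μ = j.comp ν)
    (hsq2 : m.comp j = ρ.comp πE)
    (hsq3 : n.comp i = σ.comp πH)
    (hsq4 : πF.comp m = πG.comp n) :
    Function.Injective (i.comp μ) ∧
    Function.Surjective (toPullback m n πF πG hsq4) ∧
    AddMonoidHom.ker (toPullback m n πF πG hsq4) = AddMonoidHom.range (i.comp μ) ∧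
    AddMonoidHom.ker m ⊓ AddMonoidHom.ker n = AddMonoidHom.range (i.comp μ) ∧
    AddMonoidHom.range (i.comp μ) = AddMonoidHom.range (j.comp ν) :=
  extension_gives_shortExact_over_pullback_general ν σ πG hσ hrow2 μ πH hμ hπH hcol1 πF i j m n hi
    hm hmidrow hsq1 hsq3 hsq4
end

section
/- Let Diagram 1 of abelian groups be given, let (X₁, i₁, j₁, m₁, n₁) and (X₂, i₂, j₂, m₂, n₂) be two extensions of Diagram 1, and let φ : X₁ → X₂ be a group isomorphism satisfying m₂∘φ = m₁, n₂∘φ = n₁, φ∘i₁∘μ = i₂∘μ, and φ∘j₁∘ν = j₂∘ν. Set P₂ = (i₂∘μ)(P) ⊆ X₂. Then the homomorphisms j̃ = j₂ − φ∘j₁ : E → X₂ and ĩ = i₂ − φ∘i₁ : H → X₂ take values in P₂, and satisfy j̃∘ν = 0 and ĩ∘μ = 0. Consequently there is a well-defined group homomorphism λ from the subgroup j₁(E) + i₁(H) of X₁ to P₂ determined by λ(j₁(e) + i₁(h)) = j̃(e) + ĩ(h) for e ∈ E, h ∈ H, and λ vanishes on (i₁∘μ)(P). -/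
/-!
Both difference maps land in the intersection `ker m₂ ⊓ ker n₂`, because `φ` is compatible
with `m` and `n` and the two extensions agree on `m ∘ j` and `n ∘ i`; a diagram chase in the
second extension identifies that intersection with `P₂ = (i₂ ∘ μ)(P)`. The map `λ` is
`j₁ e + i₁ h ↦ (j₂ e + i₂ h) - φ (j₁ e + i₁ h)`; it is well defined because a relation
`j₁ e + i₁ h = 0` forces `(e, h) = (ν p, -μ p)` for some `p`, and such pairs are also
relations in the second extension.
-/

universe u

open AddMonoidHom

section DiagramChase

variable {P E R H S G F X Y : Type*}
  [AddGroup P] [AddGroup E] [AddGroup R] [AddGroup H] [AddGroup S] [AddGroup G] [AddGroup F]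
  [AddGroup X] [AddGroup Y]

theorem mem_range_comp_of_mem_ker_of_mem_ker {μ : P →+ H} {πH : H →+ S} {σ : S →+ G}
    {i : H →+ X} {m : X →+ F} {n : X →+ G} (hσ : Function.Injective σ) (hcol : ker πH ≤ range μ)
    (hrow : ker m ≤ range i) (hsq : n.comp i = σ.comp πH) {x : X} (hm : m x = 0)
    (hn : n x = 0) : x ∈ range (i.comp μ) := by
  obtain ⟨h, rfl⟩ := hrow hm
  have hσπ : σ (πH h) = σ 0 := by rw [map_zero, ← hn]; exact (DFunLike.congr_fun hsq h).symm
  obtain ⟨p, rfl⟩ := hcol (hσ hσπ)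
  exact ⟨p, rfl⟩

theorem sub_mem_range_comp_of_comp_eq {A : Type*} [AddGroup A] {μ : P →+ H} {πH : H →+ S}
    {σ : S →+ G} {i₂ : H →+ Y} {m₁ : X →+ F} {m₂ : Y →+ F} {n₁ : X →+ G} {n₂ : Y →+ G}
    (hσ : Function.Injective σ) (hcol : ker πH ≤ range μ) (hrow₂ : ker m₂ ≤ range i₂)
    (hsq₂ : n₂.comp i₂ = σ.comp πH) {φ : X →+ Y} (hφm : ∀ x, m₂ (φ x) = m₁ x)
    (hφn : ∀ x, n₂ (φ x) = n₁ x) {a : A →+ Y} {b : A →+ X} (hm : m₂.comp a = m₁.comp b)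
    (hn : n₂.comp a = n₁.comp b) (z : A) : a z - φ (b z) ∈ range (i₂.comp μ) := by
  refine mem_range_comp_of_mem_ker_of_mem_ker hσ hcol hrow₂ hsq₂ ?_ ?_
  · rw [map_sub, hφm]
    exact sub_eq_zero.mpr (DFunLike.congr_fun hm z)
  · rw [map_sub, hφn]
    exact sub_eq_zero.mpr (DFunLike.congr_fun hn z)

theorem exists_eq_and_eq_neg_of_add_eq_zero {ν : P →+ E} {πE : E →+ R} {μ : P →+ H}
    {ρ : R →+ F} {i : H →+ X} {j : E →+ X} {m : X →+ F} (hρ : Function.Injective ρ)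
    (hrow : ker πE ≤ range ν) (hi : Function.Injective i) (hmi : range i ≤ ker m)
    (hsq₁ : i.comp μ = j.comp ν) (hsq₂ : m.comp j = ρ.comp πE) {e : E} {h : H}
    (heh : j e + i h = 0) : ∃ p, ν p = e ∧ μ p = -h := by
  have hje : j e = i (-h) := by rw [map_neg, eq_neg_of_add_eq_zero_left heh]
  have hρπ : ρ (πE e) = ρ 0 := by
    rw [map_zero, ← hmi ⟨-h, rfl⟩, ← hje]
    exact (DFunLike.congr_fun hsq₂ e).symm
  obtain ⟨p, hp⟩ := hrow (hρ hρπ)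
  refine ⟨p, hp, hi ?_⟩
  rw [← hje, ← hp]
  exact DFunLike.congr_fun hsq₁ p

theorem add_eq_zero_of_add_eq_zero_of_comp_eq {ν : P →+ E} {πE : E →+ R} {μ : P →+ H}
    {ρ : R →+ F} {i : H →+ X} {j : E →+ X} {m : X →+ F} (hρ : Function.Injective ρ)
    (hrow : ker πE ≤ range ν) (hi : Function.Injective i) (hmi : range i ≤ ker m)
    (hsq₁ : i.comp μ = j.comp ν) (hsq₂ : m.comp j = ρ.comp πE) {i' : H →+ Y} {j' : E →+ Y}
    (hsq₁' : i'.comp μ = j'.comp ν) {e : E} {h : H} (heh : j e + i h = 0) :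
    j' e + i' h = 0 := by
  obtain ⟨p, rfl, hp⟩ := exists_eq_and_eq_neg_of_add_eq_zero hρ hrow hi hmi hsq₁ hsq₂ heh
  rw [neg_eq_iff_eq_neg.mp hp.symm, map_neg, add_neg_eq_zero]
  exact (DFunLike.congr_fun hsq₁' p).symm

end DiagramChase

theorem exists_lift_sup_range {E H X Y : Type*} [AddCommGroup E] [AddCommGroup H]
    [AddCommGroup X] [AddCommGroup Y] (j : E →+ X) (i : H →+ X) (j' : E →+ Y) (i' : H →+ Y)
    (hker : ∀ e h, j e + i h = 0 → j' e + i' h = 0) :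
    ∃ ψ : ↥(range j ⊔ range i) →+ Y,
      ∀ (x : ↥(range j ⊔ range i)) e h, (x : X) = j e + i h → ψ x = j' e + i' h := by
  let f : E × H →+ ↥(range j ⊔ range i) :=
    (j.coprod i).codRestrict _ fun eh ↦ AddSubgroup.add_mem_sup ⟨eh.1, rfl⟩ ⟨eh.2, rfl⟩
  have hf : Function.Surjective f := by
    rintro ⟨x, hx⟩
    obtain ⟨_, ⟨e, rfl⟩, _, ⟨h, rfl⟩, rfl⟩ := AddSubgroup.mem_sup.mp hx
    exact ⟨(e, h), rfl⟩
  have hfker : ker f ≤ ker (j'.coprod i') := fun eh heh ↦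
    hker eh.1 eh.2 (congrArg Subtype.val heh)
  refine ⟨f.liftOfSurjective hf ⟨j'.coprod i', hfker⟩, fun x e h hx ↦ ?_⟩
  obtain rfl : x = f (e, h) := Subtype.ext hx
  exact f.liftOfRightInverse_comp_apply _ _ _ (e, h)

theorem difference_maps_land_in_P2_and_induce_lambda_general
    {P E R H S G F X₁ X₂ : Type u}
    [AddCommGroup P] [AddCommGroup E] [AddCommGroup R] [AddCommGroup H] [AddCommGroup S]
    [AddCommGroup G] [AddCommGroup F] [AddCommGroup X₁] [AddCommGroup X₂]
    -- row 1 : 0 → P → E → R → 0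
    (ν : P →+ E) (πE : E →+ R)
    (hrow1 : AddMonoidHom.ker πE = AddMonoidHom.range ν)
    -- row 2 : 0 → S → G → Q → 0
    (σ : S →+ G)
    (hσ : Function.Injective σ)
    -- column 1 : 0 → P → H → S → 0
    (μ : P →+ H) (πH : H →+ S)
    (hcol1 : AddMonoidHom.ker πH = AddMonoidHom.range μ)
    -- column 2 : 0 → R → F → Q → 0
    (ρ : R →+ F)
    (hρ : Function.Injective ρ)
    -- the extension (X₁, i₁, j₁, m₁, n₁) of Diagram 1
    (i₁ : H →+ X₁) (j₁ : E →+ X₁) (m₁ : X₁ →+ F) (n₁ : X₁ →+ G)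
    (hi₁ : Function.Injective i₁)
    (hmidrow₁ : AddMonoidHom.ker m₁ = AddMonoidHom.range i₁)
    (hmidcol₁ : AddMonoidHom.ker n₁ = AddMonoidHom.range j₁)
    (hsq1₁ : i₁.comp μ = j₁.comp ν)
    (hsq2₁ : m₁.comp j₁ = ρ.comp πE)
    (hsq3₁ : n₁.comp i₁ = σ.comp πH)
    -- the extension (X₂, i₂, j₂, m₂, n₂) of Diagram 1
    (i₂ : H →+ X₂) (j₂ : E →+ X₂) (m₂ : X₂ →+ F) (n₂ : X₂ →+ G)
    (hmidrow₂ : AddMonoidHom.ker m₂ = AddMonoidHom.range i₂)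
    (hmidcol₂ : AddMonoidHom.ker n₂ = AddMonoidHom.range j₂)
    (hsq1₂ : i₂.comp μ = j₂.comp ν)
    (hsq2₂ : m₂.comp j₂ = ρ.comp πE)
    (hsq3₂ : n₂.comp i₂ = σ.comp πH)
    -- the isomorphism φ : X₁ → X₂ compatible with m, n and with i∘μ, j∘ν
    (φ : X₁ ≃+ X₂)
    (hφm : ∀ x, m₂ (φ x) = m₁ x)
    (hφn : ∀ x, n₂ (φ x) = n₁ x)
    (hφiμ : ∀ p : P, φ (i₁ (μ p)) = i₂ (μ p))
    (hφjν : ∀ p : P, φ (j₁ (ν p)) = j₂ (ν p)) :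
    -- j̃ and ĩ take values in P₂ = (i₂∘μ)(P)
    (∀ e : E, j₂ e - φ (j₁ e) ∈ AddMonoidHom.range (i₂.comp μ)) ∧
    (∀ h : H, i₂ h - φ (i₁ h) ∈ AddMonoidHom.range (i₂.comp μ)) ∧
    -- j̃∘ν = 0 and ĩ∘μ = 0
    (∀ p : P, j₂ (ν p) - φ (j₁ (ν p)) = 0) ∧
    (∀ p : P, i₂ (μ p) - φ (i₁ (μ p)) = 0) ∧
    -- the induced homomorphism λ on the subgroup j₁(E) + i₁(H) of X₁
    (∃ lam : ↥(AddMonoidHom.range j₁ ⊔ AddMonoidHom.range i₁ : AddSubgroup X₁) →+ X₂,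
      (∀ (x : ↥(AddMonoidHom.range j₁ ⊔ AddMonoidHom.range i₁ : AddSubgroup X₁))
          (e : E) (h : H), (x : X₁) = j₁ e + i₁ h →
          lam x = (j₂ e - φ (j₁ e)) + (i₂ h - φ (i₁ h))) ∧
      (∀ x, lam x ∈ AddMonoidHom.range (i₂.comp μ)) ∧
      (∀ x : ↥(AddMonoidHom.range j₁ ⊔ AddMonoidHom.range i₁ : AddSubgroup X₁),
          (x : X₁) ∈ AddMonoidHom.range (i₁.comp μ) → lam x = 0)) := by
  have hn₁j₁ := (range_le_ker_iff j₁ n₁).mp hmidcol₁.ge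
  have hn₂j₂ := (range_le_ker_iff j₂ n₂).mp hmidcol₂.ge
  have hm₁i₁ := (range_le_ker_iff i₁ m₁).mp hmidrow₁.ge
  have hm₂i₂ := (range_le_ker_iff i₂ m₂).mp hmidrow₂.ge
  have hj_mem : ∀ e, j₂ e - φ (j₁ e) ∈ range (i₂.comp μ) :=
    sub_mem_range_comp_of_comp_eq (φ := φ.toAddMonoidHom) hσ hcol1.le hmidrow₂.le hsq3₂ hφm hφn
      (hsq2₂.trans hsq2₁.symm) (hn₂j₂.trans hn₁j₁.symm)
  have hi_mem : ∀ h, i₂ h - φ (i₁ h) ∈ range (i₂.comp μ) :=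
    sub_mem_range_comp_of_comp_eq (φ := φ.toAddMonoidHom) hσ hcol1.le hmidrow₂.le hsq3₂ hφm hφn
      (hm₂i₂.trans hm₁i₁.symm) (hsq3₂.trans hsq3₁.symm)
  obtain ⟨ψ, hψ⟩ := exists_lift_sup_range j₁ i₁ j₂ i₂ fun _ _ ↦
    add_eq_zero_of_add_eq_zero_of_comp_eq hρ hrow1.le hi₁ hmidrow₁.ge hsq1₁ hsq2₁ hsq1₂
  let lam := ψ - φ.toAddMonoidHom.comp (range j₁ ⊔ range i₁).subtype
  have hlam : ∀ (x : ↥(range j₁ ⊔ range i₁)) e h, (x : X₁) = j₁ e + i₁ h →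
      lam x = (j₂ e - φ (j₁ e)) + (i₂ h - φ (i₁ h)) := by
    intro x e h hx
    simp only [lam, AddMonoidHom.sub_apply, comp_apply, AddSubgroup.coe_subtype, hψ x e h hx, hx,
      AddEquiv.coe_toAddMonoidHom, map_add]
    abel
  refine ⟨hj_mem, hi_mem, fun p ↦ by rw [hφjν, sub_self], fun p ↦ by rw [hφiμ, sub_self],
    lam, hlam, ?_, ?_⟩
  · rintro ⟨x, hx⟩
    obtain ⟨_, ⟨e, rfl⟩, _, ⟨h, rfl⟩, rfl⟩ := AddSubgroup.mem_sup.mp hx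
    rw [hlam _ e h rfl]
    exact add_mem (hj_mem e) (hi_mem h)
  · rintro x ⟨p, hp⟩
    rw [hlam x 0 (μ p) (by rw [map_zero, zero_add, ← hp, comp_apply])]
    simp [hφiμ]

/-- Given two extensions `(X₁, i₁, j₁, m₁, n₁)` and `(X₂, i₂, j₂, m₂, n₂)` of Diagram 1 of
abelian groups and an isomorphism `φ : X₁ → X₂` with `m₂∘φ = m₁`, `n₂∘φ = n₁`,
`φ∘i₁∘μ = i₂∘μ`, `φ∘j₁∘ν = j₂∘ν`, the differences `j̃ = j₂ − φ∘j₁` and `ĩ = i₂ − φ∘i₁`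
take values in `P₂ = (i₂∘μ)(P)`, vanish after precomposition with `ν` resp. `μ`, and they
induce a well-defined homomorphism `λ : j₁(E) + i₁(H) → P₂` with
`λ(j₁ e + i₁ h) = j̃ e + ĩ h`, vanishing on `(i₁∘μ)(P)`. -/
theorem difference_maps_land_in_P2_and_induce_lambda
    {P E R H S G F Q X₁ X₂ : Type u}
    [AddCommGroup P] [AddCommGroup E] [AddCommGroup R] [AddCommGroup H] [AddCommGroup S]
    [AddCommGroup G] [AddCommGroup F] [AddCommGroup Q] [AddCommGroup X₁] [AddCommGroup X₂]
    -- row 1 : 0 → P → E → R → 0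
    (ν : P →+ E) (πE : E →+ R)
    (hν : Function.Injective ν) (hπE : Function.Surjective πE)
    (hrow1 : AddMonoidHom.ker πE = AddMonoidHom.range ν)
    -- row 2 : 0 → S → G → Q → 0
    (σ : S →+ G) (πG : G →+ Q)
    (hσ : Function.Injective σ) (hπG : Function.Surjective πG)
    (hrow2 : AddMonoidHom.ker πG = AddMonoidHom.range σ)
    -- column 1 : 0 → P → H → S → 0
    (μ : P →+ H) (πH : H →+ S)
    (hμ : Function.Injective μ) (hπH : Function.Surjective πH)
    (hcol1 : AddMonoidHom.ker πH = AddMonoidHom.range μ)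
    -- column 2 : 0 → R → F → Q → 0
    (ρ : R →+ F) (πF : F →+ Q)
    (hρ : Function.Injective ρ) (hπF : Function.Surjective πF)
    (hcol2 : AddMonoidHom.ker πF = AddMonoidHom.range ρ)
    -- the extension (X₁, i₁, j₁, m₁, n₁) of Diagram 1
    (i₁ : H →+ X₁) (j₁ : E →+ X₁) (m₁ : X₁ →+ F) (n₁ : X₁ →+ G)
    (hi₁ : Function.Injective i₁) (hm₁ : Function.Surjective m₁)
    (hmidrow₁ : AddMonoidHom.ker m₁ = AddMonoidHom.range i₁)
    (hj₁ : Function.Injective j₁) (hn₁ : Function.Surjective n₁)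
    (hmidcol₁ : AddMonoidHom.ker n₁ = AddMonoidHom.range j₁)
    (hsq1₁ : i₁.comp μ = j₁.comp ν)
    (hsq2₁ : m₁.comp j₁ = ρ.comp πE)
    (hsq3₁ : n₁.comp i₁ = σ.comp πH)
    (hsq4₁ : πF.comp m₁ = πG.comp n₁)
    -- the extension (X₂, i₂, j₂, m₂, n₂) of Diagram 1
    (i₂ : H →+ X₂) (j₂ : E →+ X₂) (m₂ : X₂ →+ F) (n₂ : X₂ →+ G)
    (hi₂ : Function.Injective i₂) (hm₂ : Function.Surjective m₂)
    (hmidrow₂ : AddMonoidHom.ker m₂ = AddMonoidHom.range i₂)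
    (hj₂ : Function.Injective j₂) (hn₂ : Function.Surjective n₂)
    (hmidcol₂ : AddMonoidHom.ker n₂ = AddMonoidHom.range j₂)
    (hsq1₂ : i₂.comp μ = j₂.comp ν)
    (hsq2₂ : m₂.comp j₂ = ρ.comp πE)
    (hsq3₂ : n₂.comp i₂ = σ.comp πH)
    (hsq4₂ : πF.comp m₂ = πG.comp n₂)
    -- the isomorphism φ : X₁ → X₂ compatible with m, n and with i∘μ, j∘ν
    (φ : X₁ ≃+ X₂)
    (hφm : ∀ x, m₂ (φ x) = m₁ x)
    (hφn : ∀ x, n₂ (φ x) = n₁ x)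
    (hφiμ : ∀ p : P, φ (i₁ (μ p)) = i₂ (μ p))
    (hφjν : ∀ p : P, φ (j₁ (ν p)) = j₂ (ν p)) :
    -- j̃ and ĩ take values in P₂ = (i₂∘μ)(P)
    (∀ e : E, j₂ e - φ (j₁ e) ∈ AddMonoidHom.range (i₂.comp μ)) ∧
    (∀ h : H, i₂ h - φ (i₁ h) ∈ AddMonoidHom.range (i₂.comp μ)) ∧
    -- j̃∘ν = 0 and ĩ∘μ = 0
    (∀ p : P, j₂ (ν p) - φ (j₁ (ν p)) = 0) ∧
    (∀ p : P, i₂ (μ p) - φ (i₁ (μ p)) = 0) ∧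
    -- the induced homomorphism λ on the subgroup j₁(E) + i₁(H) of X₁
    (∃ lam : ↥(AddMonoidHom.range j₁ ⊔ AddMonoidHom.range i₁ : AddSubgroup X₁) →+ X₂,
      (∀ (x : ↥(AddMonoidHom.range j₁ ⊔ AddMonoidHom.range i₁ : AddSubgroup X₁))
          (e : E) (h : H), (x : X₁) = j₁ e + i₁ h →
          lam x = (j₂ e - φ (j₁ e)) + (i₂ h - φ (i₁ h))) ∧
      (∀ x, lam x ∈ AddMonoidHom.range (i₂.comp μ)) ∧
      (∀ x : ↥(AddMonoidHom.range j₁ ⊔ AddMonoidHom.range i₁ : AddSubgroup X₁),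
          (x : X₁) ∈ AddMonoidHom.range (i₁.comp μ) → lam x = 0)) :=
  difference_maps_land_in_P2_and_induce_lambda_general ν πE hrow1 σ hσ μ πH hcol1 ρ hρ i₁ j₁ m₁ n₁
    hi₁ hmidrow₁ hmidcol₁ hsq1₁ hsq2₁ hsq3₁ i₂ j₂ m₂ n₂ hmidrow₂ hmidcol₂ hsq1₂ hsq2₂ hsq3₂ φ hφm
    hφn hφiμ hφjν
end

section
/- Let Diagram 1 of abelian groups be given, and suppose P is a divisible abelian group (equivalently, an injective object in the category Ab). Then there exists an extension of Diagram 1, i.e., an abelian group X with homomorphisms i : H → X, j : E → X, m : X → F, n : X → G making Diagram 2 commute with short exact middle row and middle column. -/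
/-!
Divisibility of `P` makes both sequences starting at `P` split, by retractions
`r : H → P` and `t : E → P`, so that `H ≅ P × S` and `E ≅ P × R`. Take
`X = P × (F ×_Q G)`: the summand `S` sits in the pullback as `0 × σ S`, which is exactly
the kernel of its projection to `F`, and symmetrically `R` sits in it as `ρ R × 0`, the
kernel of the projection to `G`. The two splittings agree on `P` because
`r ∘ μ = id = t ∘ ν`.
-/

universe u

open Function

namespace AddMonoidHom

variable {A B C D Y F G Q R S : Type*} [AddCommGroup A] [AddCommGroup B] [AddCommGroup C]
  [AddCommGroup D] [AddCommGroup Y] [AddCommGroup F] [AddCommGroup G] [AddCommGroup Q]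
  [AddCommGroup R] [AddCommGroup S]

theorem exists_retraction_of_injective [DivisibleBy A ℤ] {f : A →+ B} (hf : Injective f) :
    ∃ r : B →+ A, r.comp f = AddMonoidHom.id A :=
  (Module.Baer.of_divisible A).extension_property_addMonoidHom f hf (AddMonoidHom.id A)

theorem bijective_prod_of_exact {f : A →+ B} {g : B →+ C} (hfg : Exact f g)
    (hg : Surjective g) {r : B →+ A} (hr : r.comp f = AddMonoidHom.id A) :
    Bijective (r.prod g) := by
  have hrf : ∀ a, r (f a) = a := DFunLike.congr_fun hr
  refine ⟨(injective_iff_map_eq_zero _).2 fun b hb => ?_, fun ⟨a, c⟩ => ?_⟩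
  · obtain ⟨a, rfl⟩ := (hfg b).1 (congrArg Prod.snd hb)
    rw [← hrf a, show r (f a) = 0 from congrArg Prod.fst hb, map_zero]
  · obtain ⟨b, rfl⟩ := hg c
    refine ⟨b + f (a - r b), Prod.ext ?_ ?_⟩
    · simp [hrf]
    · simp [hfg.apply_apply_eq_zero]

theorem prod_comp_eq_inl {f : A →+ B} {g : B →+ C} {r : B →+ A}
    (hr : r.comp f = AddMonoidHom.id A) (hgf : g.comp f = 0) :
    (r.prod g).comp f = inl A C := by
  ext a
  · exact DFunLike.congr_fun hr a
  · exact DFunLike.congr_fun hgf a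

theorem exact_prodMap_id_comp {k : C →+ D} {l : D →+ Y} (hkl : Exact k l) {e : B →+ A × C}
    (he : Surjective e) : Exact ((prodMap (AddMonoidHom.id A) k).comp e) (l.comp (snd A D)) := by
  intro ⟨a, d⟩
  change l d = 0 ↔ (a, d) ∈ Set.range (Prod.map _root_.id k ∘ e)
  rw [he.range_comp, Set.range_prodMap, Set.range_id, hkl d]
  simp

def pullback (α : F →+ Q) (β : G →+ Q) : AddSubgroup (F × G) :=
  (α.comp (fst F G)).eqLocus (β.comp (snd F G))

namespace pullback

variable {α : F →+ Q} {β : G →+ Q}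

def fst : pullback α β →+ F := (AddMonoidHom.fst F G).comp (pullback α β).subtype

def snd : pullback α β →+ G := (AddMonoidHom.snd F G).comp (pullback α β).subtype

theorem condition : α.comp fst = β.comp (snd : pullback α β →+ G) :=
  AddMonoidHom.ext fun x => x.2

def inl (ρ : R →+ F) (h : α.comp ρ = 0) : R →+ pullback α β :=
  ((AddMonoidHom.inl F G).comp ρ).codRestrict _ fun x =>
    show α (ρ x) = β 0 by simpa using DFunLike.congr_fun h x

def inr (σ : S →+ G) (h : β.comp σ = 0) : S →+ pullback α β :=
  ((AddMonoidHom.inr F G).comp σ).codRestrict _ fun x =>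
    show α 0 = β (σ x) by simpa [eq_comm] using DFunLike.congr_fun h x

theorem inl_injective {ρ : R →+ F} (hρ : Injective ρ) (h : α.comp ρ = 0) :
    Injective (inl (β := β) ρ h) :=
  fun _ _ hx => hρ (congrArg (fun x => x.1.1) hx)

theorem inr_injective {σ : S →+ G} (hσ : Injective σ) (h : β.comp σ = 0) :
    Injective (inr (α := α) σ h) :=
  fun _ _ hx => hσ (congrArg (fun x => x.1.2) hx)

theorem fst_surjective (hβ : Surjective β) : Surjective (fst : pullback α β →+ F) :=
  fun f =>
    let ⟨g, hg⟩ := hβ (α f)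
    ⟨⟨(f, g), hg.symm⟩, rfl⟩

theorem snd_surjective (hα : Surjective α) : Surjective (snd : pullback α β →+ G) :=
  fun g =>
    let ⟨f, hf⟩ := hα (β g)
    ⟨⟨(f, g), hf⟩, rfl⟩

theorem exact_inl_snd {ρ : R →+ F} (h : Exact ρ α) :
    Exact (inl (β := β) ρ h.addMonoidHom_comp_eq_zero) snd := by
  rintro ⟨⟨f, g⟩, hfg⟩
  change α f = β g at hfg
  change g = 0 ↔ _
  constructor
  · rintro rfl
    obtain ⟨x, rfl⟩ := (h f).1 (by simpa using hfg)
    exact ⟨x, rfl⟩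
  · rintro ⟨x, hx⟩
    exact (congrArg (fun y => y.1.2) hx).symm

theorem exact_inr_fst {σ : S →+ G} (h : Exact σ β) :
    Exact (inr (α := α) σ h.addMonoidHom_comp_eq_zero) fst := by
  rintro ⟨⟨f, g⟩, hfg⟩
  change α f = β g at hfg
  change f = 0 ↔ _
  constructor
  · rintro rfl
    obtain ⟨x, rfl⟩ := (h g).1 (by simpa using hfg.symm)
    exact ⟨x, rfl⟩
  · rintro ⟨x, hx⟩
    exact (congrArg (fun y => y.1.1) hx).symm

end pullback

end AddMonoidHom

open AddMonoidHom

/-- (Existence half of Corollary `corpinj` of the note.) If `P` is a divisible abelian group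
(equivalently, an injective object of the category of abelian groups), then Diagram 1 admits
an extension: there exist an abelian group `X` and homomorphisms `i : H → X`, `j : E → X`,
`m : X → F`, `n : X → G` such that the middle row `0 → H → X → F → 0` and the middle column
`0 → E → X → G → 0` are short exact and all the squares of Diagram 2 commute. -/
theorem extension_exists_of_divisible
    {P E R H S G F Q : Type u}
    [AddCommGroup P] [AddCommGroup E] [AddCommGroup R] [AddCommGroup H] [AddCommGroup S]
    [AddCommGroup G] [AddCommGroup F] [AddCommGroup Q]
    [DivisibleBy P ℤ]
    -- row 1 : 0 → P → E → R → 0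
    (ν : P →+ E) (πE : E →+ R)
    (hν : Function.Injective ν) (hπE : Function.Surjective πE)
    (hrow1 : AddMonoidHom.ker πE = AddMonoidHom.range ν)
    -- row 2 : 0 → S → G → Q → 0
    (σ : S →+ G) (πG : G →+ Q)
    (hσ : Function.Injective σ) (hπG : Function.Surjective πG)
    (hrow2 : AddMonoidHom.ker πG = AddMonoidHom.range σ)
    -- column 1 : 0 → P → H → S → 0
    (μ : P →+ H) (πH : H →+ S)
    (hμ : Function.Injective μ) (hπH : Function.Surjective πH)
    (hcol1 : AddMonoidHom.ker πH = AddMonoidHom.range μ)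
    -- column 2 : 0 → R → F → Q → 0
    (ρ : R →+ F) (πF : F →+ Q)
    (hρ : Function.Injective ρ) (hπF : Function.Surjective πF)
    (hcol2 : AddMonoidHom.ker πF = AddMonoidHom.range ρ) :
    ∃ (X : Type u) (_ : AddCommGroup X), ∃ (i : H →+ X) (j : E →+ X) (m : X →+ F) (n : X →+ G),
      -- middle row 0 → H → X → F → 0 is short exact
      Function.Injective i ∧ Function.Surjective m ∧
      AddMonoidHom.ker m = AddMonoidHom.range i ∧
      -- middle column 0 → E → X → G → 0 is short exact
      Function.Injective j ∧ Function.Surjective n ∧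
      AddMonoidHom.ker n = AddMonoidHom.range j ∧
      -- the squares commute
      i.comp μ = j.comp ν ∧
      m.comp j = ρ.comp πE ∧
      n.comp i = σ.comp πH ∧
      πF.comp m = πG.comp n := by
  obtain ⟨r, hr⟩ := exists_retraction_of_injective hμ
  obtain ⟨t, ht⟩ := exists_retraction_of_injective hν
  replace hrow1 : Exact ν πE := exact_iff.2 hrow1
  replace hrow2 : Exact σ πG := exact_iff.2 hrow2
  replace hcol1 : Exact μ πH := exact_iff.2 hcol1
  replace hcol2 : Exact ρ πF := exact_iff.2 hcol2
  have hrH := bijective_prod_of_exact hcol1 hπH hr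
  have htE := bijective_prod_of_exact hrow1 hπE ht
  have hσ0 := hrow2.addMonoidHom_comp_eq_zero
  have hρ0 := hcol2.addMonoidHom_comp_eq_zero
  refine ⟨P × pullback πF πG, inferInstance,
    (prodMap (.id P) (pullback.inr σ hσ0)).comp (r.prod πH),
    (prodMap (.id P) (pullback.inl ρ hρ0)).comp (t.prod πE), pullback.fst.comp (snd P _),
    pullback.snd.comp (snd P _), ?_, ?_, ?_, ?_, ?_, ?_, ?_, rfl, rfl, ?_⟩
  · exact (injective_id.prodMap (pullback.inr_injective hσ hσ0)).comp hrH.1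
  · exact (pullback.fst_surjective hπG).comp Prod.snd_surjective
  · exact exact_iff.1 (exact_prodMap_id_comp (pullback.exact_inr_fst (α := πF) hrow2) hrH.2)
  · exact (injective_id.prodMap (pullback.inl_injective hρ hρ0)).comp htE.1
  · exact (pullback.snd_surjective hπF).comp Prod.snd_surjective
  · exact exact_iff.1 (exact_prodMap_id_comp (pullback.exact_inl_snd (β := πG) hcol2) htE.2)
  · rw [AddMonoidHom.comp_assoc, AddMonoidHom.comp_assoc,
      prod_comp_eq_inl hr hcol1.addMonoidHom_comp_eq_zero,
      prod_comp_eq_inl ht hrow1.addMonoidHom_comp_eq_zero]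
    ext p <;> simp [pullback.inl, pullback.inr]
  · rw [← AddMonoidHom.comp_assoc, pullback.condition, AddMonoidHom.comp_assoc]
end

section
/- Let Diagram 1 of abelian groups be given, and suppose P is a divisible abelian group (equivalently, an injective object in the category Ab). Then any two extensions (X₁, i₁, j₁, m₁, n₁) and (X₂, i₂, j₂, m₂, n₂) of Diagram 1 admit a compatible isomorphism: there exists a group isomorphism φ : X₁ → X₂ with φ∘i₁ = i₂, φ∘j₁ = j₂, m₂∘φ = m₁, and n₂∘φ = n₁. -/
/-!
Both `X₁` and `X₂` are extensions of the pullback `F ×_Q G` by `P`: the map `(m, n)` is onto the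
pullback, with kernel `i (μ P)`. As `P` is injective, both extensions split, and the splittings can
be matched. Choose a retraction `t₂ : X₂ → P` and extend `t₂ ∘ (i₂ + j₂) : H × E → P` along
`i₁ + j₁` to a retraction `t₁ : X₁ → P`; this is possible because `i₁ h + j₁ e = i₁ (μ a)` forces
`i₂ h + j₂ e = i₂ (μ a)`. Then `(t₁, m₁, n₁)` and `(t₂, m₂, n₂)` embed `X₁` and `X₂` onto the same
subgroup `P × (F ×_Q G)`, and the resulting isomorphism `X₁ ≃ X₂` is compatible with all the maps.
-/

universe u

open Function LinearMap

theorem LinearMap.exists_linearEquiv_comp_eq_of_range_eq {R X₁ X₂ Y : Type*} [Ring R]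
    [AddCommGroup X₁] [Module R X₁] [AddCommGroup X₂] [Module R X₂] [AddCommGroup Y] [Module R Y]
    {f₁ : X₁ →ₗ[R] Y} {f₂ : X₂ →ₗ[R] Y} (h₁ : Injective f₁) (h₂ : Injective f₂)
    (h : range f₁ = range f₂) : ∃ φ : X₁ ≃ₗ[R] X₂, ∀ x, f₂ (φ x) = f₁ x := by
  refine ⟨(LinearEquiv.ofInjective f₁ h₁).trans
    ((LinearEquiv.ofEq _ _ h).trans (LinearEquiv.ofInjective f₂ h₂).symm), fun x => ?_⟩
  rw [LinearEquiv.trans_apply, LinearEquiv.trans_apply, ← LinearEquiv.ofInjective_apply (h := h₂),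
    LinearEquiv.apply_symm_apply]
  rfl

namespace Function.Exact

variable {R P X B : Type*} [Ring R] [AddCommGroup P] [Module R P] [AddCommGroup X] [Module R X]
  [AddCommGroup B] [Module R B] {κ : P →ₗ[R] X} {p : X →ₗ[R] B} {t : X →ₗ[R] P}

theorem injective_prod_of_comp_eq_id (h : Exact κ p) (ht : t ∘ₗ κ = LinearMap.id) :
    Injective (t.prod p) := by
  refine (injective_iff_map_eq_zero _).mpr fun x hx => ?_
  obtain ⟨htx, hpx⟩ := Prod.mk_eq_zero.mp hx
  obtain ⟨a, rfl⟩ := (h x).mp hpx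
  rw [← LinearMap.comp_apply, ht, id_apply] at htx
  rw [htx, map_zero]

theorem range_prod_of_comp_eq_id (h : Exact κ p) (ht : t ∘ₗ κ = LinearMap.id) :
    range (t.prod p) = (⊤ : Submodule R P).prod (range p) := by
  ext ⟨a, b⟩
  constructor
  · rintro ⟨x, hx⟩
    exact ⟨trivial, x, congr_arg Prod.snd hx⟩
  · rintro ⟨-, x, rfl⟩
    refine ⟨x + κ (a - t x), ?_⟩
    have htκ := LinearMap.congr_fun ht (a - t x)
    simp only [LinearMap.comp_apply, id_apply] at htκ
    ext
    · simp only [LinearMap.prod_apply, Function.prod_apply, map_add, htκ, Prod.fst_add,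
        add_sub_cancel]
    · simp only [LinearMap.prod_apply, Function.prod_apply, map_add, h.apply_apply_eq_zero,
        Prod.snd_add, add_zero]

end Function.Exact

namespace Module.Baer

variable {R P V X X₁ X₂ B : Type*} [Ring R] [AddCommGroup P] [Module R P] [AddCommGroup V]
  [Module R V] [AddCommGroup X] [Module R X] [AddCommGroup X₁] [Module R X₁] [AddCommGroup X₂]
  [Module R X₂] [AddCommGroup B] [Module R B]

theorem exists_comp_eq_of_ker_le (hP : Module.Baer R P) (u : V →ₗ[R] X) (g : V →ₗ[R] P)
    (h : ker u ≤ ker g) : ∃ t : X →ₗ[R] P, t ∘ₗ u = g := by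
  obtain ⟨t, ht⟩ := hP.extension_property ((ker u).liftQ u le_rfl)
    (ker_eq_bot.mp ((ker u).ker_liftQ_eq_bot u le_rfl le_rfl)) ((ker u).liftQ g h)
  exact ⟨t, LinearMap.ext fun c => LinearMap.congr_fun ht (Submodule.Quotient.mk c)⟩

theorem exists_linearEquiv_of_exact (hP : Module.Baer R P) {κ₁ : P →ₗ[R] X₁}
    {p₁ : X₁ →ₗ[R] B} {κ₂ : P →ₗ[R] X₂} {p₂ : X₂ →ₗ[R] B} (hκ₂ : Function.Injective κ₂)
    (h₁ : Exact κ₁ p₁) (h₂ : Exact κ₂ p₂) (hp : range p₁ = range p₂)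
    (u : V →ₗ[R] X₁) (v : V →ₗ[R] X₂) (hpuv : ∀ c, p₂ (v c) = p₁ (u c))
    (hκuv : ∀ a c, u c = κ₁ a → v c = κ₂ a) (hκu : ∀ a, ∃ c, u c = κ₁ a) :
    ∃ φ : X₁ ≃ₗ[R] X₂, (∀ c, φ (u c) = v c) ∧ ∀ x, p₂ (φ x) = p₁ x := by
  obtain ⟨t₂, ht₂⟩ := hP.extension_property κ₂ hκ₂ LinearMap.id
  obtain ⟨t₁, ht₁⟩ := hP.exists_comp_eq_of_ker_le u (t₂ ∘ₗ v) fun c hc => by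
    rw [mem_ker, LinearMap.comp_apply, hκuv 0 c (by rwa [map_zero]), map_zero, map_zero]
  have ht₁κ₁ : t₁ ∘ₗ κ₁ = LinearMap.id := LinearMap.ext fun a => by
    obtain ⟨c, hc⟩ := hκu a
    calc t₁ (κ₁ a) = t₂ (v c) := by rw [← hc]; exact LinearMap.congr_fun ht₁ c
      _ = a := by rw [hκuv a c hc]; exact LinearMap.congr_fun ht₂ a
  have hrange : range (t₁.prod p₁) = range (t₂.prod p₂) := by
    rw [h₁.range_prod_of_comp_eq_id ht₁κ₁, h₂.range_prod_of_comp_eq_id ht₂, hp]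
  obtain ⟨φ, hφ⟩ := exists_linearEquiv_comp_eq_of_range_eq
    (h₁.injective_prod_of_comp_eq_id ht₁κ₁) (h₂.injective_prod_of_comp_eq_id ht₂) hrange
  refine ⟨φ, fun c => h₂.injective_prod_of_comp_eq_id ht₂ ?_, fun x => congr_arg Prod.snd (hφ x)⟩
  rw [hφ, LinearMap.prod_apply, LinearMap.prod_apply, Function.prod_apply, Function.prod_apply,
    ← LinearMap.comp_apply t₁, ht₁, LinearMap.comp_apply, hpuv]

end Module.Baer

section DiagramExtension

variable {P E R H S G F Q X : Type*} [AddCommGroup P] [AddCommGroup E] [AddCommGroup R]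
  [AddCommGroup H] [AddCommGroup S] [AddCommGroup G] [AddCommGroup F] [AddCommGroup Q]
  [AddCommGroup X] {ν : P →+ E} {πE : E →+ R} {σ : S →+ G} {πG : G →+ Q} {μ : P →+ H}
  {πH : H →+ S} {ρ : R →+ F} {πF : F →+ Q} {i : H →+ X} {j : E →+ X} {m : X →+ F} {n : X →+ G}

theorem exact_comp_prod (hσ : Injective σ) (hcol1 : Exact μ πH) (hrow : Exact i m)
    (hsq3 : n.comp i = σ.comp πH) : Exact (i.comp μ) (m.prod n) := by
  have hni : ∀ h, n (i h) = σ (πH h) := DFunLike.congr_fun hsq3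
  intro x
  constructor
  · intro hx
    obtain ⟨hmx, hnx⟩ := Prod.mk_eq_zero.mp hx
    obtain ⟨h, rfl⟩ := (hrow x).mp hmx
    obtain ⟨a, rfl⟩ := (hcol1 h).mp (hσ (by rw [← hni, hnx, map_zero]))
    exact ⟨a, rfl⟩
  · rintro ⟨a, rfl⟩
    simp only [AddMonoidHom.prod_apply, AddMonoidHom.comp_apply, hrow.apply_apply_eq_zero, hni,
      hcol1.apply_apply_eq_zero, map_zero, Prod.mk_zero_zero]

theorem range_prod_eq_pullback (hm : Surjective m) (hrow2 : Exact σ πG) (hπH : Surjective πH)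
    (hrow : Exact i m) (hsq3 : n.comp i = σ.comp πH) (hsq4 : πF.comp m = πG.comp n) :
    Set.range (m.prod n) = {y | πF y.1 = πG y.2} := by
  have hni : ∀ h, n (i h) = σ (πH h) := DFunLike.congr_fun hsq3
  have hmn : ∀ x, πF (m x) = πG (n x) := DFunLike.congr_fun hsq4
  ext ⟨f, g⟩
  constructor
  · rintro ⟨x, hx⟩
    obtain ⟨rfl, rfl⟩ := Prod.mk.inj hx
    exact hmn x
  · intro hfg
    obtain ⟨x, rfl⟩ := hm f
    obtain ⟨s, hs⟩ := (hrow2 (g - n x)).mp (by rw [map_sub, ← hfg.symm.trans (hmn x), sub_self])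
    obtain ⟨h, rfl⟩ := hπH s
    refine ⟨x + i h, ?_⟩
    rw [AddMonoidHom.prod_apply, map_add, map_add, hrow.apply_apply_eq_zero, add_zero, hni, hs,
      add_sub_cancel]

theorem prod_apply_add (hrow : Exact i m) (hcol : Exact j n) (hsq2 : m.comp j = ρ.comp πE)
    (hsq3 : n.comp i = σ.comp πH) (h : H) (e : E) :
    m.prod n (i h + j e) = (ρ (πE e), σ (πH h)) := by
  rw [AddMonoidHom.prod_apply, map_add, map_add, hrow.apply_apply_eq_zero,
    hcol.apply_apply_eq_zero, zero_add, add_zero]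
  exact Prod.ext (DFunLike.congr_fun hsq2 e) (DFunLike.congr_fun hsq3 h)

theorem exists_eq_of_add_eq_comp (hσ : Injective σ) (hcol1 : Exact μ πH) (hcol : Exact j n)
    (hj : Injective j) (hsq1 : i.comp μ = j.comp ν) (hsq3 : n.comp i = σ.comp πH) {h : H} {e : E}
    {a : P} (hx : i h + j e = i (μ a)) : ∃ b, h = μ b ∧ e = ν (a - b) := by
  have hni : ∀ h, n (i h) = σ (πH h) := DFunLike.congr_fun hsq3
  have hij : ∀ a, i (μ a) = j (ν a) := DFunLike.congr_fun hsq1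
  have hn := congr_arg n hx
  rw [map_add, hcol.apply_apply_eq_zero, add_zero, hni, hni, hcol1.apply_apply_eq_zero,
    map_zero] at hn
  obtain ⟨b, rfl⟩ := (hcol1 h).mp (hσ (hn.trans (map_zero σ).symm))
  refine ⟨b, rfl, hj ?_⟩
  rw [map_sub, map_sub, ← hij, ← hij, eq_sub_of_add_eq' hx]

end DiagramExtension

theorem compatible_iso_of_divisible_general
    {P E R H S G F Q X₁ X₂ : Type u}
    [AddCommGroup P] [AddCommGroup E] [AddCommGroup R] [AddCommGroup H] [AddCommGroup S]
    [AddCommGroup G] [AddCommGroup F] [AddCommGroup Q] [AddCommGroup X₁] [AddCommGroup X₂]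
    [DivisibleBy P ℤ]
    -- row 1 : 0 → P → E → R → 0
    (ν : P →+ E) (πE : E →+ R)
    -- row 2 : 0 → S → G → Q → 0
    (σ : S →+ G) (πG : G →+ Q)
    (hσ : Function.Injective σ)
    (hrow2 : AddMonoidHom.ker πG = AddMonoidHom.range σ)
    -- column 1 : 0 → P → H → S → 0
    (μ : P →+ H) (πH : H →+ S)
    (hμ : Function.Injective μ) (hπH : Function.Surjective πH)
    (hcol1 : AddMonoidHom.ker πH = AddMonoidHom.range μ)
    -- column 2 : 0 → R → F → Q → 0
    (ρ : R →+ F) (πF : F →+ Q)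
    -- the extension (X₁, i₁, j₁, m₁, n₁) of Diagram 1
    (i₁ : H →+ X₁) (j₁ : E →+ X₁) (m₁ : X₁ →+ F) (n₁ : X₁ →+ G)
    (hm₁ : Function.Surjective m₁)
    (hmidrow₁ : AddMonoidHom.ker m₁ = AddMonoidHom.range i₁)
    (hj₁ : Function.Injective j₁)
    (hmidcol₁ : AddMonoidHom.ker n₁ = AddMonoidHom.range j₁)
    (hsq1₁ : i₁.comp μ = j₁.comp ν)
    (hsq2₁ : m₁.comp j₁ = ρ.comp πE)
    (hsq3₁ : n₁.comp i₁ = σ.comp πH)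
    (hsq4₁ : πF.comp m₁ = πG.comp n₁)
    -- the extension (X₂, i₂, j₂, m₂, n₂) of Diagram 1
    (i₂ : H →+ X₂) (j₂ : E →+ X₂) (m₂ : X₂ →+ F) (n₂ : X₂ →+ G)
    (hi₂ : Function.Injective i₂) (hm₂ : Function.Surjective m₂)
    (hmidrow₂ : AddMonoidHom.ker m₂ = AddMonoidHom.range i₂)
    (hmidcol₂ : AddMonoidHom.ker n₂ = AddMonoidHom.range j₂)
    (hsq1₂ : i₂.comp μ = j₂.comp ν)
    (hsq2₂ : m₂.comp j₂ = ρ.comp πE)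
    (hsq3₂ : n₂.comp i₂ = σ.comp πH)
    (hsq4₂ : πF.comp m₂ = πG.comp n₂) :
    ∃ φ : X₁ ≃+ X₂,
      (∀ h : H, φ (i₁ h) = i₂ h) ∧
      (∀ e : E, φ (j₁ e) = j₂ e) ∧
      (∀ x : X₁, m₂ (φ x) = m₁ x) ∧
      (∀ x : X₁, n₂ (φ x) = n₁ x) := by
  rw [← AddMonoidHom.exact_iff] at hrow2 hcol1 hmidrow₁ hmidcol₁ hmidrow₂ hmidcol₂
  have hrange : range (m₁.prod n₁).toIntLinearMap = range (m₂.prod n₂).toIntLinearMap :=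
    SetLike.coe_injective <|
      (range_prod_eq_pullback hm₁ hrow2 hπH hmidrow₁ hsq3₁ hsq4₁).trans
        (range_prod_eq_pullback hm₂ hrow2 hπH hmidrow₂ hsq3₂ hsq4₂).symm
  obtain ⟨φ, hφ, hmn⟩ := (Module.Baer.of_divisible P).exists_linearEquiv_of_exact
    (κ₁ := (i₁.comp μ).toIntLinearMap) (p₁ := (m₁.prod n₁).toIntLinearMap)
    (κ₂ := (i₂.comp μ).toIntLinearMap) (p₂ := (m₂.prod n₂).toIntLinearMap) (hi₂.comp hμ)
    (exact_comp_prod hσ hcol1 hmidrow₁ hsq3₁) (exact_comp_prod hσ hcol1 hmidrow₂ hsq3₂) hrange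
    (i₁.coprod j₁).toIntLinearMap (i₂.coprod j₂).toIntLinearMap
    (fun ⟨h, e⟩ => (prod_apply_add hmidrow₂ hmidcol₂ hsq2₂ hsq3₂ h e).trans
      (prod_apply_add hmidrow₁ hmidcol₁ hsq2₁ hsq3₁ h e).symm)
    (fun a ⟨h, e⟩ hx => by
      obtain ⟨b, rfl, rfl⟩ := exists_eq_of_add_eq_comp hσ hcol1 hmidcol₁ hj₁ hsq1₁ hsq3₁ hx
      show i₂ (μ b) + j₂ (ν (a - b)) = i₂ (μ a)
      rw [← AddMonoidHom.comp_apply j₂, ← hsq1₂, AddMonoidHom.comp_apply, ← map_add,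
        ← map_add, add_sub_cancel])
    (fun a => ⟨(μ a, 0), by simp⟩)
  exact ⟨φ.toAddEquiv, fun h => by simpa using hφ (h, 0), fun e => by simpa using hφ (0, e),
    fun x => congr_arg Prod.fst (hmn x), fun x => congr_arg Prod.snd (hmn x)⟩

/-- (Uniqueness half of Corollary `corpinj` of the note.) If `P` is a divisible abelian group
(equivalently, an injective object of the category of abelian groups), then any two extensions
`(X₁, i₁, j₁, m₁, n₁)` and `(X₂, i₂, j₂, m₂, n₂)` of Diagram 1 admit a compatible isomorphism:
there is a group isomorphism `φ : X₁ → X₂` with `φ∘i₁ = i₂`, `φ∘j₁ = j₂`, `m₂∘φ = m₁` and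
`n₂∘φ = n₁`. -/
theorem compatible_iso_of_divisible
    {P E R H S G F Q X₁ X₂ : Type u}
    [AddCommGroup P] [AddCommGroup E] [AddCommGroup R] [AddCommGroup H] [AddCommGroup S]
    [AddCommGroup G] [AddCommGroup F] [AddCommGroup Q] [AddCommGroup X₁] [AddCommGroup X₂]
    [DivisibleBy P ℤ]
    -- row 1 : 0 → P → E → R → 0
    (ν : P →+ E) (πE : E →+ R)
    (hν : Function.Injective ν) (hπE : Function.Surjective πE)
    (hrow1 : AddMonoidHom.ker πE = AddMonoidHom.range ν)
    -- row 2 : 0 → S → G → Q → 0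
    (σ : S →+ G) (πG : G →+ Q)
    (hσ : Function.Injective σ) (hπG : Function.Surjective πG)
    (hrow2 : AddMonoidHom.ker πG = AddMonoidHom.range σ)
    -- column 1 : 0 → P → H → S → 0
    (μ : P →+ H) (πH : H →+ S)
    (hμ : Function.Injective μ) (hπH : Function.Surjective πH)
    (hcol1 : AddMonoidHom.ker πH = AddMonoidHom.range μ)
    -- column 2 : 0 → R → F → Q → 0
    (ρ : R →+ F) (πF : F →+ Q)
    (hρ : Function.Injective ρ) (hπF : Function.Surjective πF)
    (hcol2 : AddMonoidHom.ker πF = AddMonoidHom.range ρ)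
    -- the extension (X₁, i₁, j₁, m₁, n₁) of Diagram 1
    (i₁ : H →+ X₁) (j₁ : E →+ X₁) (m₁ : X₁ →+ F) (n₁ : X₁ →+ G)
    (hi₁ : Function.Injective i₁) (hm₁ : Function.Surjective m₁)
    (hmidrow₁ : AddMonoidHom.ker m₁ = AddMonoidHom.range i₁)
    (hj₁ : Function.Injective j₁) (hn₁ : Function.Surjective n₁)
    (hmidcol₁ : AddMonoidHom.ker n₁ = AddMonoidHom.range j₁)
    (hsq1₁ : i₁.comp μ = j₁.comp ν)
    (hsq2₁ : m₁.comp j₁ = ρ.comp πE)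
    (hsq3₁ : n₁.comp i₁ = σ.comp πH)
    (hsq4₁ : πF.comp m₁ = πG.comp n₁)
    -- the extension (X₂, i₂, j₂, m₂, n₂) of Diagram 1
    (i₂ : H →+ X₂) (j₂ : E →+ X₂) (m₂ : X₂ →+ F) (n₂ : X₂ →+ G)
    (hi₂ : Function.Injective i₂) (hm₂ : Function.Surjective m₂)
    (hmidrow₂ : AddMonoidHom.ker m₂ = AddMonoidHom.range i₂)
    (hj₂ : Function.Injective j₂) (hn₂ : Function.Surjective n₂)
    (hmidcol₂ : AddMonoidHom.ker n₂ = AddMonoidHom.range j₂)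
    (hsq1₂ : i₂.comp μ = j₂.comp ν)
    (hsq2₂ : m₂.comp j₂ = ρ.comp πE)
    (hsq3₂ : n₂.comp i₂ = σ.comp πH)
    (hsq4₂ : πF.comp m₂ = πG.comp n₂) :
    ∃ φ : X₁ ≃+ X₂,
      (∀ h : H, φ (i₁ h) = i₂ h) ∧
      (∀ e : E, φ (j₁ e) = j₂ e) ∧
      (∀ x : X₁, m₂ (φ x) = m₁ x) ∧
      (∀ x : X₁, n₂ (φ x) = n₁ x) :=
  compatible_iso_of_divisible_general ν πE σ πG hσ hrow2 μ πH hμ hπH hcol1 ρ πF i₁ j₁ m₁ n₁ hm₁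
    hmidrow₁ hj₁ hmidcol₁ hsq1₁ hsq2₁ hsq3₁ hsq4₁ i₂ j₂ m₂ n₂ hi₂ hm₂ hmidrow₂ hmidcol₂ hsq1₂ hsq2₂
    hsq3₂ hsq4₂
end
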